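/- Let 0 < s ≤ 1 and 0 < p < ∞, and let u ∈ Ṁ^{s,p}(X) be an M^{s,p}-quasicontinuous function. Let O ∈ X, j ∈ ℕ, t > 0, and define E_t = {x ∈ A_{κ^j}(O) : |u(x) − m_u(A_{κ^j}(O))| > t}. Then there is a constant C = C(p, c_μ, c_R, Λ) > 0 such that for every Λ ≥ 1 and every s-gradient g ∈ D_s(u), cap_{s,p}(E_t, Λ A_{κ^j}(O)) ≤ (C / t^p) ∫_{Λ A_{κ^j}(O)} g(x)^p dμ(x). -/

import Mathlib

/-!
Let `m` be the median of `u` over the annulus `A`. The test function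
`v = ramp(u - m - t/2) + ramp(m - t/2 - u)`, with ramps of slope `2/t` capped at `1`, is at
least `1` on `E_t`, is quasicontinuous, and has the `s`-gradient `(4/t) g`. Each ramp vanishes
on a subset of `A` carrying at least half of `μ(A)`, by the definition of the median. For a
function `w` vanishing on such a set `Z`, integrating the pointwise gradient inequality
`|w(x)| ≤ diam(F)^s (g(x) + g(y))` over `y ∈ Z` bounds `∫_F |w|^p` by
`diam(F)^{sp} μ(F)/μ(Z) ∫_F g^p`, and `μ(ΛA)/μ(A)` is controlled by doubling and reverse
doubling.
-/

open MeasureTheory Metric Set Filter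
open scoped ENNReal NNReal Topology

noncomputable section
namespace Paper

variable {X : Type*} [MetricSpace X] [MeasurableSpace X]

/-- The median `m_u(E)` of a function `u` over a set `E`. -/
def median (μ : Measure X) (u : X → ℝ) (E : Set X) : ℝ :=
  sInf {a : ℝ | μ {x | x ∈ E ∧ a < u x} < μ E / 2}

/-- `g` is an `s`-gradient of `u` (with respect to `μ`). -/
def IsSGradient (μ : Measure X) (s : ℝ) (u : X → ℝ) (g : X → ℝ≥0∞) : Prop :=
  Measurable g ∧ ∃ N : Set X, μ N = 0 ∧ ∀ x ∉ N, ∀ y ∉ N,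
    ENNReal.ofReal |u x - u y| ≤ ENNReal.ofReal (dist x y ^ s) * (g x + g y)

/-- The `p`-th power of the `L^p` quasinorm of `u : X → ℝ` restricted to `F`. -/
def lpNormP (μ : Measure X) (p : ℝ) (u : X → ℝ) (F : Set X) : ℝ≥0∞ :=
  ∫⁻ x in F, ENNReal.ofReal |u x| ^ p ∂μ

/-- Membership in the homogeneous Hajłasz–Sobolev space `Ṁ^{s,p}(X)`:
`u` is measurable (hence finite everywhere, being real valued) and has an
`s`-gradient in `L^p`. -/
def MemHomHajlasz (μ : Measure X) (s p : ℝ) (u : X → ℝ) : Prop :=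
  Measurable u ∧ ∃ g : X → ℝ≥0∞, IsSGradient μ s u g ∧ (∫⁻ x, g x ^ p ∂μ) < ⊤

/-- The homogeneous Hajłasz quasi-seminorm `‖u‖_{Ṁ^{s,p}}`. -/
def hajlaszSeminorm (μ : Measure X) (s p : ℝ) (u : X → ℝ) : ℝ≥0∞ :=
  ⨅ (g : X → ℝ≥0∞) (_ : IsSGradient μ s u g), (∫⁻ x, g x ^ p ∂μ) ^ (1 / p)

/-- The quasi-seminorm `‖u‖_{M^{s,p}} = ‖u‖_{L^p} + ‖u‖_{Ṁ^{s,p}}`. -/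
def hajlaszNorm (μ : Measure X) (s p : ℝ) (u : X → ℝ) : ℝ≥0∞ :=
  lpNormP μ p u Set.univ ^ (1 / p) + hajlaszSeminorm μ s p u

/-- The capacity `Cap_{M^{s,p}}(E)`; the infimum over the empty set is `⊤ = ∞`. -/
def hajlaszCapacity (μ : Measure X) (s p : ℝ) (E : Set X) : ℝ≥0∞ :=
  ⨅ (u : X → ℝ) (_ : MemHomHajlasz μ s p u ∧ lpNormP μ p u Set.univ < ⊤ ∧
      ∃ U : Set X, IsOpen U ∧ E ⊆ U ∧ ∀ x ∈ U, 1 ≤ u x),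
    hajlaszNorm μ s p u ^ p

/-- `M^{s,p}`-quasicontinuity of `u`. -/
def HajlaszQC (μ : Measure X) (s p : ℝ) (u : X → ℝ) : Prop :=
  ∀ ε : ℝ, 0 < ε → ∃ E : Set X,
    hajlaszCapacity μ s p E < ENNReal.ofReal ε ∧ ContinuousOn u Eᶜ

/-- The variational relative capacity `cap_{s,p}(E,F)`. -/
def relCap (μ : Measure X) (s p : ℝ) (E F : Set X) : ℝ≥0∞ :=
  ⨅ (v : X → ℝ) (_ : MemHomHajlasz μ s p v ∧ HajlaszQC μ s p v ∧ ∀ x ∈ E, 1 ≤ v x),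
    (lpNormP μ p v F / ENNReal.ofReal (Metric.diam F ^ (s * p)) +
      ⨅ (g : X → ℝ≥0∞) (_ : IsSGradient μ s v g), ∫⁻ x in F, g x ^ p ∂μ)

/-- The annulus `A_r(O) = B(O, κ r) \ B(O, r)`. -/
def ann (κ : ℝ) (O : X) (r : ℝ) : Set X := ball O (κ * r) \ ball O r

/-- The enlarged annulus `Λ A_r(O) = B(O, Λ κ r) \ B(O, r / Λ)`. -/
def annL (κ Λ : ℝ) (O : X) (r : ℝ) : Set X := ball O (Λ * (κ * r)) \ ball O (r / Λ)

/-- `E` is `(s,p)`-thin at infinity with respect to the basepoint `O`. -/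
def ThinAtInfinity (μ : Measure X) (s p κ : ℝ) (O : X) (E : Set X) : Prop :=
  ∀ Λ : ℝ, 1 < Λ →
    Tendsto (fun m : ℕ =>
        ∑' j : ℕ, relCap μ s p (E ∩ ann κ O (κ ^ (m + j))) (annL κ Λ O (κ ^ (m + j))))
      atTop (𝓝 0)

/-- `u(x) → c` as `d(x,O) → ∞` along `x ∈ X \ E`. -/
def TendstoOutside (O : X) (E : Set X) (u : X → ℝ) (c : ℝ) : Prop :=
  ∀ ε : ℝ, 0 < ε → ∃ N : ℕ, ∀ x : X, x ∉ E → (N : ℝ) < dist x O → |u x - c| < ε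

/-- The `ρ`-restricted Hausdorff content of codimension `d`, where the infimum runs
over all finite or countable coverings of `E` by balls of positive radii at most `ρ`. -/
def hContent (μ : Measure X) (d : ℝ) (ρ : ℝ≥0∞) (E : Set X) : ℝ≥0∞ :=
  ⨅ (c : ℕ → X) (r : ℕ → ℝ) (J : Set ℕ)
    (_ : (∀ j ∈ J, 0 < r j ∧ ENNReal.ofReal (r j) ≤ ρ) ∧
        E ⊆ ⋃ j ∈ J, ball (c j) (r j)),
    ∑' j : J, μ (ball (c (j : ℕ)) (r (j : ℕ))) / ENNReal.ofReal (r (j : ℕ) ^ d)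

/-- The homogeneous fractional Sobolev quasinorm `‖u‖_{Ẇ^{s,p}_q}`. -/
def fracNorm (μ : Measure X) (s p q : ℝ) (u : X → ℝ) : ℝ≥0∞ :=
  (∫⁻ x, (∫⁻ y, ENNReal.ofReal |u x - u y| ^ q /
      (ENNReal.ofReal (dist x y ^ (s * q)) * μ (ball x (dist x y))) ∂μ) ^ (p / q) ∂μ) ^ (1 / p)

/-- Membership in the homogeneous fractional Sobolev space `Ẇ^{s,p}_q(X)`. -/
def MemFrac (μ : Measure X) (s p q : ℝ) (u : X → ℝ) : Prop :=
  Measurable u ∧ fracNorm μ s p q u < ⊤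

/-- The capacity `Cap_{W^{s,p}_q}(E)`; the infimum over the empty set is `⊤ = ∞`. -/
def fracCapacity (μ : Measure X) (s p q : ℝ) (E : Set X) : ℝ≥0∞ :=
  ⨅ (u : X → ℝ) (_ : MemFrac μ s p q u ∧ lpNormP μ p u Set.univ < ⊤ ∧
      ∃ U : Set X, IsOpen U ∧ E ⊆ U ∧ ∀ x ∈ U, 1 ≤ u x),
    (lpNormP μ p u Set.univ ^ (1 / p) + fracNorm μ s p q u) ^ p

/-- `W^{s,p}_q`-quasicontinuity of `u`. -/
def FracQC (μ : Measure X) (s p q : ℝ) (u : X → ℝ) : Prop :=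
  ∀ ε : ℝ, 0 < ε → ∃ E : Set X,
    fracCapacity μ s p q E < ENNReal.ofReal ε ∧ ContinuousOn u Eᶜ

theorem add_rpow_le_two_rpow_mul (a b : ℝ≥0∞) {p : ℝ} (hp : 0 ≤ p) :
    (a + b) ^ p ≤ 2 ^ p * (a ^ p + b ^ p) := by
  rcases le_total p 1 with hp1 | hp1
  · calc (a + b) ^ p ≤ a ^ p + b ^ p := ENNReal.rpow_add_le_add_rpow a b hp hp1
      _ ≤ 2 ^ p * (a ^ p + b ^ p) := by
          refine le_mul_of_one_le_left' ?_
          simpa using ENNReal.rpow_le_rpow_of_exponent_le (x := 2) one_le_two hp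
  · calc (a + b) ^ p ≤ 2 ^ (p - 1) * (a ^ p + b ^ p) :=
          ENNReal.rpow_add_le_mul_rpow_add_rpow a b hp1
      _ ≤ 2 ^ p * (a ^ p + b ^ p) :=
          mul_le_mul_left (ENNReal.rpow_le_rpow_of_exponent_le one_le_two (by linarith)) _

theorem ofReal_div_rpow {a t p : ℝ} (ha : 0 ≤ a) (ht : 0 < t) (hp : 0 ≤ p) :
    ENNReal.ofReal (a / t) ^ p = ENNReal.ofReal a ^ p / ENNReal.ofReal (t ^ p) := by
  rw [ENNReal.ofReal_rpow_of_nonneg (div_nonneg ha ht.le) hp, Real.div_rpow ha ht.le,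
    ENNReal.ofReal_div_of_pos (Real.rpow_pos_of_pos ht p), ENNReal.ofReal_rpow_of_nonneg ha hp]

theorem lintegral_mul_rpow {α : Type*} [MeasurableSpace α] {ν : Measure α} {g : α → ℝ≥0∞}
    (hg : Measurable g) {p : ℝ} (hp : 0 ≤ p) (a : ℝ≥0∞) :
    ∫⁻ x, (a * g x) ^ p ∂ν = a ^ p * ∫⁻ x, g x ^ p ∂ν := by
  simp_rw [ENNReal.mul_rpow_of_nonneg _ _ hp]
  exact lintegral_const_mul _ (hg.pow_const p)

theorem lpNormP_add_le {α : Type*} [MeasurableSpace α] {μ : Measure α} {p : ℝ} (hp : 0 ≤ p)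
    {f h : α → ℝ} (hf : Measurable f) (F : Set α) :
    lpNormP μ p (f + h) F ≤ 2 ^ p * (lpNormP μ p f F + lpNormP μ p h F) := by
  unfold lpNormP
  rw [← lintegral_add_left (hf.abs.ennreal_ofReal.pow_const p),
    ← lintegral_const_mul' _ _ (by finiteness)]
  refine lintegral_mono fun x => ?_
  calc ENNReal.ofReal |f x + h x| ^ p ≤ (ENNReal.ofReal |f x| + ENNReal.ofReal |h x|) ^ p := by
        refine ENNReal.rpow_le_rpow ?_ hp
        exact (ENNReal.ofReal_le_ofReal (abs_add_le _ _)).trans ENNReal.ofReal_add_le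
    _ ≤ _ := add_rpow_le_two_rpow_mul _ _ hp

section Median

variable {α : Type*} [MeasurableSpace α] {μ : Measure α} {u : α → ℝ} {A : Set α}

theorem nonempty_median_set (hu : Measurable u) (hA : MeasurableSet A) (hA0 : μ A ≠ 0)
    (hAfin : μ A ≠ ⊤) : {a : ℝ | μ {x | x ∈ A ∧ a < u x} < μ A / 2}.Nonempty := by
  set T : ℕ → Set α := fun n => {x | x ∈ A ∧ (n : ℝ) < u x}
  have hT : Tendsto (fun n => μ (T n)) atTop (𝓝 0) := by
    have hempty : ⋂ n, T n = ∅ := by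
      refine eq_empty_of_forall_notMem fun x hx => ?_
      obtain ⟨n, hn⟩ := exists_nat_gt (u x)
      exact (mem_iInter.mp hx n).2.not_gt hn
    have := tendsto_measure_iInter_atTop (μ := μ) (s := T)
      (fun n => (hA.inter (measurableSet_lt measurable_const hu)).nullMeasurableSet)
      (fun m n hmn x hx => ⟨hx.1, lt_of_le_of_lt (Nat.cast_le.mpr hmn) hx.2⟩)
      ⟨0, measure_ne_top_of_subset (fun x hx => hx.1) hAfin⟩
    rwa [hempty, measure_empty] at this
  obtain ⟨n, hn⟩ := (hT.eventually_lt_const (ENNReal.half_pos hA0)).exists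
  exact ⟨(n : ℝ), hn⟩

theorem bddBelow_median_set (hA0 : μ A ≠ 0) (hAfin : μ A ≠ ⊤) :
    BddBelow {a : ℝ | μ {x | x ∈ A ∧ a < u x} < μ A / 2} := by
  set T : ℕ → Set α := fun n => {x | x ∈ A ∧ -(n : ℝ) < u x}
  have hT : Tendsto (fun n => μ (T n)) atTop (𝓝 (μ A)) := by
    have hunion : ⋃ n, T n = A := by
      refine Subset.antisymm (iUnion_subset fun n x hx => hx.1) fun x hx => ?_
      obtain ⟨n, hn⟩ := exists_nat_gt (-u x)
      exact mem_iUnion.mpr ⟨n, hx, by linarith⟩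
    have := tendsto_measure_iUnion_atTop (μ := μ) (s := T)
      fun m n hmn x hx => ⟨hx.1, lt_of_le_of_lt (neg_le_neg (Nat.cast_le.mpr hmn)) hx.2⟩
    rwa [hunion] at this
  obtain ⟨n, hn⟩ := (hT.eventually_const_lt (ENNReal.half_lt_self hA0 hAfin)).exists
  refine ⟨-n, fun a ha => le_of_not_gt fun han => ?_⟩
  have hsub : T n ⊆ {x | x ∈ A ∧ a < u x} := fun x hx => ⟨hx.1, han.trans hx.2⟩
  exact (measure_mono hsub).not_gt (ha.trans hn)

theorem measure_median_add_lt (hu : Measurable u) (hA : MeasurableSet A) (hA0 : μ A ≠ 0)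
    (hAfin : μ A ≠ ⊤) {ε : ℝ} (hε : 0 < ε) :
    μ {x | x ∈ A ∧ median μ u A + ε < u x} < μ A / 2 := by
  obtain ⟨a, ha, hlt⟩ := exists_lt_of_csInf_lt (nonempty_median_set hu hA hA0 hAfin)
    (lt_add_of_pos_right (median μ u A) hε)
  refine lt_of_le_of_lt (measure_mono ?_) ha
  exact fun x hx => ⟨hx.1, hlt.trans hx.2⟩

theorem half_measure_le_measure_le_median_add (hu : Measurable u) (hA : MeasurableSet A)
    (hA0 : μ A ≠ 0) (hAfin : μ A ≠ ⊤) {ε : ℝ} (hε : 0 < ε) :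
    μ A / 2 ≤ μ {x | x ∈ A ∧ u x ≤ median μ u A + ε} := by
  refine ENNReal.le_of_add_le_add_right (ENNReal.div_ne_top hAfin two_ne_zero) ?_
  calc μ A / 2 + μ A / 2 = μ A := ENNReal.add_halves _
    _ ≤ μ {x | x ∈ A ∧ u x ≤ median μ u A + ε} + μ {x | x ∈ A ∧ median μ u A + ε < u x} :=
        (measure_mono fun x hx => (le_or_gt (u x) _).imp (fun h => ⟨hx, h⟩) fun h => ⟨hx, h⟩).trans
          (measure_union_le _ _)
    _ ≤ _ := by gcongr; exact (measure_median_add_lt hu hA hA0 hAfin hε).le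

theorem half_measure_le_measure_median_sub_lt (hA0 : μ A ≠ 0) (hAfin : μ A ≠ ⊤) {ε : ℝ}
    (hε : 0 < ε) : μ A / 2 ≤ μ {x | x ∈ A ∧ median μ u A - ε < u x} :=
  le_of_not_gt fun h => (sub_lt_self (median μ u A) hε).not_ge
    (csInf_le (bddBelow_median_set hA0 hAfin) h)

end Median

section Gradient

variable {μ : Measure X} {s p : ℝ} {u : X → ℝ} {g : X → ℝ≥0∞}

theorem IsSGradient.comp_lipschitzWith {φ : ℝ → ℝ} {K : ℝ≥0} (hφ : LipschitzWith K φ)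
    (hg : IsSGradient μ s u g) : IsSGradient μ s (φ ∘ u) fun x => K * g x := by
  obtain ⟨hgm, N, hN, hgrad⟩ := hg
  refine ⟨measurable_const.mul hgm, N, hN, fun x hx y hy => ?_⟩
  calc ENNReal.ofReal |φ (u x) - φ (u y)| ≤ K * ENNReal.ofReal |u x - u y| := by
        rw [← Real.dist_eq, ← Real.dist_eq, ← ENNReal.ofReal_coe_nnreal,
          ← ENNReal.ofReal_mul K.coe_nonneg]
        exact ENNReal.ofReal_le_ofReal (hφ.dist_le_mul _ _)
    _ ≤ K * (ENNReal.ofReal (dist x y ^ s) * (g x + g y)) := by gcongr; exact hgrad x hx y hy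
    _ = _ := by ring

theorem MemHomHajlasz.comp_lipschitzWith (hp : 0 ≤ p) {φ : ℝ → ℝ} {K : ℝ≥0}
    (hφ : LipschitzWith K φ) (hu : MemHomHajlasz μ s p u) : MemHomHajlasz μ s p (φ ∘ u) := by
  obtain ⟨hum, g, hg, hgp⟩ := hu
  refine ⟨hφ.continuous.measurable.comp hum, _, hg.comp_lipschitzWith hφ, ?_⟩
  rw [lintegral_mul_rpow hg.1 hp]
  exact ENNReal.mul_lt_top (by finiteness) hgp

theorem HajlaszQC.comp_continuous {φ : ℝ → ℝ} (hφ : Continuous φ) (hu : HajlaszQC μ s p u) :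
    HajlaszQC μ s p (φ ∘ u) := fun ε hε =>
  let ⟨E, hE, hcont⟩ := hu ε hε
  ⟨E, hE, hφ.comp_continuousOn hcont⟩

theorem relCap_le_of_isSGradient {E F : Set X} (hu : MemHomHajlasz μ s p u)
    (huqc : HajlaszQC μ s p u) (huE : ∀ x ∈ E, 1 ≤ u x) (hg : IsSGradient μ s u g) :
    relCap μ s p E F ≤
      lpNormP μ p u F / ENNReal.ofReal (diam F ^ (s * p)) + ∫⁻ x in F, g x ^ p ∂μ :=
  (iInf₂_le u ⟨hu, huqc, huE⟩).trans (add_le_add_right (iInf₂_le g hg) _)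

theorem measure_mul_lintegral_rpow_le_of_eqOn_zero {F Z : Set X} (hs : 0 ≤ s) (hp : 0 ≤ p)
    (hg : IsSGradient μ s u g) (hF : MeasurableSet F) (hFb : Bornology.IsBounded F)
    (hZ : MeasurableSet Z) (hZF : Z ⊆ F) (hZfin : μ Z ≠ ⊤) (hu0 : ∀ x ∈ Z, u x = 0) :
    μ Z * ∫⁻ x in F, ENNReal.ofReal |u x| ^ p ∂μ ≤
      2 ^ p * ENNReal.ofReal (diam F ^ (s * p)) * (2 * μ F * ∫⁻ x in F, g x ^ p ∂μ) := by
  obtain ⟨hgm, N, hN, hgrad⟩ := hg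
  set D := ENNReal.ofReal (diam F ^ (s * p))
  have hgpm : Measurable fun x => g x ^ p := hgm.pow_const p
  have hN' : ∀ᵐ x ∂μ, x ∉ N := measure_eq_zero_iff_ae_notMem.mp hN
  have hpoint : ∀ x ∈ F, x ∉ N → ∀ y ∈ Z, y ∉ N →
      ENNReal.ofReal |u x| ^ p ≤ 2 ^ p * D * (g x ^ p + g y ^ p) := by
    intro x hx hxN y hy hyN
    have hxy : ENNReal.ofReal |u x| ≤ ENNReal.ofReal (diam F ^ s) * (g x + g y) := by
      have h := hgrad x hxN y hyN
      rw [hu0 y hy, sub_zero] at h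
      refine h.trans (mul_le_mul_left (ENNReal.ofReal_le_ofReal ?_) _)
      exact Real.rpow_le_rpow dist_nonneg (dist_le_diam_of_mem hFb hx (hZF hy)) hs
    calc ENNReal.ofReal |u x| ^ p ≤ (ENNReal.ofReal (diam F ^ s) * (g x + g y)) ^ p :=
          ENNReal.rpow_le_rpow hxy hp
      _ = D * (g x + g y) ^ p := by
          rw [ENNReal.mul_rpow_of_nonneg _ _ hp, ENNReal.ofReal_rpow_of_nonneg (by positivity) hp,
            ← Real.rpow_mul diam_nonneg]
      _ ≤ D * (2 ^ p * (g x ^ p + g y ^ p)) := by gcongr; exact add_rpow_le_two_rpow_mul _ _ hp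
      _ = 2 ^ p * D * (g x ^ p + g y ^ p) := by ring
  have hinner : ∀ x ∈ F, x ∉ N → ENNReal.ofReal |u x| ^ p * μ Z ≤
      2 ^ p * D * (g x ^ p * μ Z + ∫⁻ y in Z, g y ^ p ∂μ) := by
    intro x hx hxN
    calc ENNReal.ofReal |u x| ^ p * μ Z = ∫⁻ _ in Z, ENNReal.ofReal |u x| ^ p ∂μ :=
          (setLIntegral_const _ _).symm
      _ ≤ ∫⁻ y in Z, 2 ^ p * D * (g x ^ p + g y ^ p) ∂μ := by
          refine lintegral_mono_ae ?_
          filter_upwards [ae_restrict_of_ae hN', ae_restrict_mem hZ] with y hyN hy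
          exact hpoint x hx hxN y hy hyN
      _ = _ := by
          rw [lintegral_const_mul _ (hgpm.const_add _),
            lintegral_add_left measurable_const, setLIntegral_const]
  calc μ Z * ∫⁻ x in F, ENNReal.ofReal |u x| ^ p ∂μ
      = ∫⁻ x in F, ENNReal.ofReal |u x| ^ p * μ Z ∂μ := by
        rw [lintegral_mul_const' _ _ hZfin, mul_comm]
    _ ≤ ∫⁻ x in F, 2 ^ p * D * (g x ^ p * μ Z + ∫⁻ y in Z, g y ^ p ∂μ) ∂μ := by
        refine lintegral_mono_ae ?_
        filter_upwards [ae_restrict_of_ae hN', ae_restrict_mem hF] with x hxN hx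
        exact hinner x hx hxN
    _ = 2 ^ p * D * ((∫⁻ x in F, g x ^ p ∂μ) * μ Z + (∫⁻ y in Z, g y ^ p ∂μ) * μ F) := by
        rw [lintegral_const_mul _ ((hgpm.mul_const _).add_const _),
          lintegral_add_right _ measurable_const, lintegral_mul_const _ hgpm, setLIntegral_const]
    _ ≤ 2 ^ p * D * ((∫⁻ x in F, g x ^ p ∂μ) * μ F + (∫⁻ y in F, g y ^ p ∂μ) * μ F) := by
        gcongr
    _ = 2 ^ p * D * (2 * μ F * ∫⁻ x in F, g x ^ p ∂μ) := by ring

theorem lintegral_rpow_le_of_eqOn_zero {A F Z : Set X} {c : ℝ≥0∞} (hs : 0 ≤ s) (hp : 0 ≤ p)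
    (hg : IsSGradient μ s u g) (hF : MeasurableSet F) (hFb : Bornology.IsBounded F)
    (hZ : MeasurableSet Z) (hZF : Z ⊆ F) (hFfin : μ F ≠ ⊤) (hu0 : ∀ x ∈ Z, u x = 0)
    (hAZ : μ A / 2 ≤ μ Z) (hA0 : μ A ≠ 0) (hc : μ F ≤ c * μ A) :
    ∫⁻ x in F, ENNReal.ofReal |u x| ^ p ∂μ ≤
      4 * c * 2 ^ p * ENNReal.ofReal (diam F ^ (s * p)) * ∫⁻ x in F, g x ^ p ∂μ := by
  have hZfin : μ Z ≠ ⊤ := measure_ne_top_of_subset hZF hFfin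
  have hAfin : μ A ≠ ⊤ := by
    rw [← ENNReal.mul_div_cancel two_ne_zero ENNReal.ofNat_ne_top (b := μ A)]
    exact ENNReal.mul_ne_top ENNReal.ofNat_ne_top (ne_top_of_le_ne_top hZfin hAZ)
  refine (ENNReal.mul_le_mul_iff_right hA0 hAfin).mp ?_
  calc μ A * ∫⁻ x in F, ENNReal.ofReal |u x| ^ p ∂μ
      = 2 * (μ A / 2) * ∫⁻ x in F, ENNReal.ofReal |u x| ^ p ∂μ := by
        rw [ENNReal.mul_div_cancel two_ne_zero ENNReal.ofNat_ne_top]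
    _ ≤ 2 * (μ Z * ∫⁻ x in F, ENNReal.ofReal |u x| ^ p ∂μ) := by rw [← mul_assoc]; gcongr
    _ ≤ 2 * (2 ^ p * ENNReal.ofReal (diam F ^ (s * p)) *
          (2 * (c * μ A) * ∫⁻ x in F, g x ^ p ∂μ)) := by
        refine mul_le_mul_right ?_ 2
        exact (measure_mul_lintegral_rpow_le_of_eqOn_zero hs hp hg hF hFb hZ hZF hZfin hu0).trans
          (by gcongr)
    _ = _ := by ring

end Gradient

def ramp (k : ℝ≥0) (a z : ℝ) : ℝ := min 1 (k * max (z - a) 0)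

theorem ramp_nonneg (k : ℝ≥0) (a z : ℝ) : 0 ≤ ramp k a z :=
  le_min zero_le_one (mul_nonneg k.coe_nonneg (le_max_right _ _))

theorem ramp_of_le {k : ℝ≥0} {a z : ℝ} (h : z ≤ a) : ramp k a z = 0 := by
  simp [ramp, max_eq_right (sub_nonpos.mpr h)]

theorem ramp_eq_one {k : ℝ≥0} {a z : ℝ} (h : 1 ≤ k * (z - a)) : ramp k a z = 1 :=
  min_eq_left (h.trans (mul_le_mul_of_nonneg_left (le_max_left _ _) k.coe_nonneg))

theorem lipschitzWith_ramp (k : ℝ≥0) (a : ℝ) : LipschitzWith k (ramp k a) := by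
  refine LipschitzWith.of_dist_le_mul fun z w => ?_
  rw [Real.dist_eq, Real.dist_eq]
  calc |ramp k a z - ramp k a w| ≤ max |1 - 1| |k * max (z - a) 0 - k * max (w - a) 0| :=
        abs_min_sub_min_le_max _ _ _ _
    _ = k * |max (z - a) 0 - max (w - a) 0| := by
        rw [sub_self, abs_zero, ← mul_sub, abs_mul, NNReal.abs_eq, max_eq_right (by positivity)]
    _ ≤ k * |z - w| := by
        refine mul_le_mul_of_nonneg_left ?_ k.coe_nonneg
        simpa only [sub_sub_sub_cancel_right] using abs_max_sub_max_le_abs (z - a) (w - a) 0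

theorem lipschitzWith_ramp_neg (k : ℝ≥0) (a : ℝ) : LipschitzWith k fun z => ramp k a (-z) := by
  have h := (lipschitzWith_ramp k a).comp LipschitzWith.id.neg
  rw [mul_one] at h
  exact h

theorem one_le_ramp_add_ramp_neg {t m z : ℝ} (ht : 0 < t) (h : t < |z - m|) :
    1 ≤ ramp (2 / t).toNNReal (m + t / 2) z + ramp (2 / t).toNNReal (t / 2 - m) (-z) := by
  have hk : ((2 / t).toNNReal : ℝ) = 2 / t := Real.coe_toNNReal _ (by positivity)
  have hone : ∀ {a y : ℝ}, t / 2 ≤ y - a → ramp (2 / t).toNNReal a y = 1 := fun hy =>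
    ramp_eq_one (by rw [hk, div_mul_eq_mul_div, le_div_iff₀ ht]; linarith)
  rcases lt_abs.mp h with h | h
  · linarith [hone (a := m + t / 2) (y := z) (by linarith),
      ramp_nonneg (2 / t).toNNReal (t / 2 - m) (-z)]
  · linarith [hone (a := t / 2 - m) (y := -z) (by linarith),
      ramp_nonneg (2 / t).toNNReal (m + t / 2) z]

section Superlevel

variable {μ : Measure X} {s p : ℝ} {u : X → ℝ} {g : X → ℝ≥0∞}

theorem relCap_setOf_lt_abs_sub_median_le {A F : Set X} {c : ℝ≥0∞} {t : ℝ} (hs : 0 ≤ s)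
    (hp : 0 ≤ p) (hu : MemHomHajlasz μ s p u) (huqc : HajlaszQC μ s p u)
    (hg : IsSGradient μ s u g) (hA : MeasurableSet A) (hF : MeasurableSet F)
    (hFb : Bornology.IsBounded F) (hAF : A ⊆ F) (hA0 : μ A ≠ 0) (hFfin : μ F ≠ ⊤)
    (hc : μ F ≤ c * μ A) (ht : 0 < t) :
    relCap μ s p {x | x ∈ A ∧ t < |u x - median μ u A|} F ≤
      2 ^ p * 2 ^ p * (8 * c * 2 ^ p + 1) / ENNReal.ofReal (t ^ p) *
        ∫⁻ x in F, g x ^ p ∂μ := by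
  set m := median μ u A
  set k : ℝ≥0 := (2 / t).toNNReal
  have hkp : (k : ℝ≥0∞) ^ p = 2 ^ p / ENNReal.ofReal (t ^ p) := by
    have h := ofReal_div_rpow zero_le_two ht hp
    rw [ENNReal.ofReal_ofNat] at h
    exact h
  have hAfin : μ A ≠ ⊤ := measure_ne_top_of_subset hAF hFfin
  set D := ENNReal.ofReal (diam F ^ (s * p))
  set J := ∫⁻ x in F, g x ^ p ∂μ
  have hpiece : ∀ (φ : ℝ → ℝ) (Z : Set X), LipschitzWith k φ → MeasurableSet Z → Z ⊆ A →
      (∀ x ∈ Z, φ (u x) = 0) → μ A / 2 ≤ μ Z →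
      ∫⁻ x in F, ENNReal.ofReal |φ (u x)| ^ p ∂μ ≤ 4 * c * 2 ^ p * D * (k ^ p * J) := by
    intro φ Z hφ hZ hZA hφ0 hAZ
    rw [← lintegral_mul_rpow hg.1 hp]
    exact lintegral_rpow_le_of_eqOn_zero hs hp (hg.comp_lipschitzWith hφ) hF hFb hZ
      (hZA.trans hAF) hFfin hφ0 hAZ hA0 hc
  have hplus := hpiece _ {x | x ∈ A ∧ u x ≤ m + t / 2} (lipschitzWith_ramp k (m + t / 2))
    (hA.inter (measurableSet_le hu.1 measurable_const)) (fun x hx => hx.1)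
    (fun x hx => ramp_of_le hx.2) (half_measure_le_measure_le_median_add hu.1 hA hA0 hAfin
      (half_pos ht))
  have hminus := hpiece _ {x | x ∈ A ∧ m - t / 2 < u x} (lipschitzWith_ramp_neg k (t / 2 - m))
    (hA.inter (measurableSet_lt measurable_const hu.1)) (fun x hx => hx.1)
    (fun x hx => ramp_of_le (by linarith [hx.2]))
    (half_measure_le_measure_median_sub_lt hA0 hAfin (half_pos ht))
  set φ : ℝ → ℝ := fun z => ramp k (m + t / 2) z + ramp k (t / 2 - m) (-z)
  have hφ : LipschitzWith (2 * k) φ := by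
    rw [two_mul]
    exact (lipschitzWith_ramp k (m + t / 2)).add (lipschitzWith_ramp_neg k (t / 2 - m))
  have hlp : lpNormP μ p (φ ∘ u) F ≤ 2 ^ p * (8 * c * 2 ^ p) * (k ^ p * J) * D := by
    refine (lpNormP_add_le hp ((lipschitzWith_ramp k _).continuous.measurable.comp hu.1) F).trans ?_
    calc 2 ^ p * (_ + _) ≤ 2 ^ p * (4 * c * 2 ^ p * D * (k ^ p * J) +
          4 * c * 2 ^ p * D * (k ^ p * J)) := by gcongr; exacts [hplus, hminus]
      _ = _ := by ring
  calc relCap μ s p {x | x ∈ A ∧ t < |u x - m|} F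
      ≤ lpNormP μ p (φ ∘ u) F / D + ∫⁻ x in F, ((2 * k : ℝ≥0) * g x) ^ p ∂μ :=
        relCap_le_of_isSGradient (hu.comp_lipschitzWith hp hφ) (huqc.comp_continuous hφ.continuous)
          (fun x hx => one_le_ramp_add_ramp_neg ht hx.2) (hg.comp_lipschitzWith hφ)
    _ ≤ 2 ^ p * (8 * c * 2 ^ p) * (k ^ p * J) + 2 ^ p * (k ^ p * J) := by
        rw [lintegral_mul_rpow hg.1 hp, ENNReal.coe_mul, ENNReal.mul_rpow_of_nonneg _ _ hp,
          ENNReal.coe_ofNat, mul_assoc]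
        exact add_le_add (ENNReal.div_le_of_le_mul hlp) le_rfl
    _ = _ := by
        rw [hkp]
        simp only [div_eq_mul_inv]
        ring

end Superlevel

section Annulus

variable {κ Λ r : ℝ} {O : X}

theorem measurableSet_ann [OpensMeasurableSpace X] : MeasurableSet (ann κ O r) :=
  measurableSet_ball.diff measurableSet_ball

theorem measurableSet_annL [OpensMeasurableSpace X] : MeasurableSet (annL κ Λ O r) :=
  measurableSet_ball.diff measurableSet_ball

theorem isBounded_annL {Y : Type*} [MetricSpace Y] {O : Y} :
    Bornology.IsBounded (annL κ Λ O r) :=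
  isBounded_ball.subset sdiff_subset

theorem ann_subset_annL {Y : Type*} [MetricSpace Y] {O : Y} (hκr : 0 ≤ κ * r) (hr : 0 ≤ r)
    (hΛ : 1 ≤ Λ) :
    ann κ O r ⊆ annL κ Λ O r :=
  sdiff_subset_sdiff (ball_subset_ball (le_mul_of_one_le_left hκr hΛ))
    (ball_subset_ball (div_le_self hr hΛ))

theorem measure_ball_two_pow_mul_le {μ : Measure X} {cμ : ℝ}
    (hdoub : ∀ (x : X) (r : ℝ), 0 < r → μ (ball x (2 * r)) ≤ ENNReal.ofReal cμ * μ (ball x r))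
    (x : X) (n : ℕ) (hr : 0 < r) :
    μ (ball x (2 ^ n * r)) ≤ ENNReal.ofReal cμ ^ n * μ (ball x r) := by
  induction n with
  | zero => simp
  | succ n ih =>
    calc μ (ball x (2 ^ (n + 1) * r)) = μ (ball x (2 * (2 ^ n * r))) := by ring_nf
      _ ≤ ENNReal.ofReal cμ * μ (ball x (2 ^ n * r)) := hdoub x _ (by positivity)
      _ ≤ ENNReal.ofReal cμ * (ENNReal.ofReal cμ ^ n * μ (ball x r)) := by gcongr
      _ = ENNReal.ofReal cμ ^ (n + 1) * μ (ball x r) := by ring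

theorem mul_measure_ball_le_measure_ann {μ : Measure X} {c : ℝ≥0∞}
    (hrev : μ (ball O r) ≤ c * μ (ball O (κ * r))) (hfin : μ (ball O (κ * r)) ≠ ⊤) :
    (1 - c) * μ (ball O (κ * r)) ≤ μ (ann κ O r) := by
  rw [ENNReal.sub_mul fun _ _ => hfin, one_mul]
  exact (tsub_le_tsub_left hrev _).trans le_measure_sdiff

theorem measure_annL_le_mul_measure_ann {μ : Measure X} {cμ cR : ℝ} {n : ℕ}
    (hfin : μ (ball O (κ * r)) ≠ ⊤)
    (hdoub : ∀ (x : X) (r : ℝ), 0 < r → μ (ball x (2 * r)) ≤ ENNReal.ofReal cμ * μ (ball x r))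
    (hrev : μ (ball O r) ≤ ENNReal.ofReal cR * μ (ball O (κ * r))) (hcR : cR < 1)
    (hκr : 0 < κ * r) (hΛ : Λ ≤ 2 ^ n) :
    μ (annL κ Λ O r) ≤ ENNReal.ofReal cμ ^ n * (1 - ENNReal.ofReal cR)⁻¹ * μ (ann κ O r) := by
  have hcR' : 1 - ENNReal.ofReal cR ≠ 0 := (tsub_pos_of_lt (ENNReal.ofReal_lt_one.mpr hcR)).ne'
  calc μ (annL κ Λ O r) ≤ μ (ball O (2 ^ n * (κ * r))) :=
        measure_mono (sdiff_subset.trans (ball_subset_ball (by gcongr)))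
    _ ≤ ENNReal.ofReal cμ ^ n * μ (ball O (κ * r)) := measure_ball_two_pow_mul_le hdoub O n hκr
    _ = ENNReal.ofReal cμ ^ n * (1 - ENNReal.ofReal cR)⁻¹ *
          ((1 - ENNReal.ofReal cR) * μ (ball O (κ * r))) := by
        rw [mul_assoc, ← mul_assoc _ (1 - _), ENNReal.inv_mul_cancel hcR' (by finiteness), one_mul]
    _ ≤ _ := by gcongr; exact mul_measure_ball_le_measure_ann hrev hfin

end Annulus

theorem statement7_general [BorelSpace X]
    (μ : Measure X)
    (hball : ∀ (x : X) (r : ℝ), 0 < r → 0 < μ (ball x r) ∧ μ (ball x r) < ⊤)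
    (cμ : ℝ)
    (hdoub : ∀ (x : X) (r : ℝ), 0 < r → μ (ball x (2 * r)) ≤ ENNReal.ofReal cμ * μ (ball x r))
    (cR κ : ℝ) (hcR1 : cR < 1) (hκ : 1 < κ)
    (hrev : ∀ (x : X) (r : ℝ), 0 < r → μ (ball x r) ≤ ENNReal.ofReal cR * μ (ball x (κ * r)))
    (s p : ℝ) (hs0 : 0 < s) (hp : 0 < p)
    (u : X → ℝ) (hu : MemHomHajlasz μ s p u) (huqc : HajlaszQC μ s p u) :
    ∀ Λ : ℝ, 1 ≤ Λ → ∃ C : ℝ≥0∞, 0 < C ∧ C < ⊤ ∧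
      ∀ (O : X) (j : ℕ) (t : ℝ), 0 < t →
      ∀ g : X → ℝ≥0∞, IsSGradient μ s u g →
        relCap μ s p
            {x : X | x ∈ ann κ O (κ ^ j) ∧ t < |u x - median μ u (ann κ O (κ ^ j))|}
            (annL κ Λ O (κ ^ j)) ≤
          C / ENNReal.ofReal (t ^ p) * ∫⁻ x in annL κ Λ O (κ ^ j), g x ^ p ∂μ := by
  intro Λ hΛ
  obtain ⟨n, hn⟩ := pow_unbounded_of_one_lt Λ (one_lt_two (α := ℝ))
  set c := ENNReal.ofReal cμ ^ n * (1 - ENNReal.ofReal cR)⁻¹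
  have hc : c ≠ ⊤ := ENNReal.mul_ne_top (by finiteness) (ENNReal.inv_ne_top.mpr
    (tsub_pos_of_lt (ENNReal.ofReal_lt_one.mpr hcR1)).ne')
  refine ⟨2 ^ p * 2 ^ p * (8 * c * 2 ^ p + 1), by positivity, by finiteness,
    fun O j t ht g hg => ?_⟩
  have hr : 0 < κ ^ j := pow_pos (by linarith) j
  have hκr : 0 < κ * κ ^ j := mul_pos (by linarith) hr
  have hB := hball O _ hκr
  have hFA := measure_annL_le_mul_measure_ann hB.2.ne hdoub (hrev O _ hr) hcR1 hκr hn.le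
  have hA0 : μ (ann κ O (κ ^ j)) ≠ 0 := by
    refine (lt_of_lt_of_le ?_ (mul_measure_ball_le_measure_ann (hrev O _ hr) hB.2.ne)).ne'
    exact ENNReal.mul_pos (tsub_pos_of_lt (ENNReal.ofReal_lt_one.mpr hcR1)).ne' hB.1.ne'
  exact relCap_setOf_lt_abs_sub_median_le hs0.le hp.le hu huqc hg measurableSet_ann
    measurableSet_annL isBounded_annL (ann_subset_annL hκr.le hr.le hΛ) hA0
    (measure_ne_top_of_subset sdiff_subset (hball O _ (mul_pos (by linarith) hκr)).2.ne) hFA ht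

/-- Lemma 6.3: a capacitary weak type estimate. For every `Λ ≥ 1`
there is a constant `C = C(p, c_μ, c_R, Λ) > 0` such that, for the superlevel set
`E_t` of `|u - m_u(A_{κ^j}(O))|` inside the annulus, and every `s`-gradient `g` of `u`,
`cap_{s,p}(E_t, Λ A_{κ^j}(O)) ≤ (C / t^p) ∫_{Λ A_{κ^j}(O)} g^p dμ`. -/
theorem statement7 [BorelSpace X]
    (μ : Measure X) (hcomp : μ.IsComplete)
    (hball : ∀ (x : X) (r : ℝ), 0 < r → 0 < μ (ball x r) ∧ μ (ball x r) < ⊤)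
    (hdiam : EMetric.diam (Set.univ : Set X) = ⊤)
    (cμ : ℝ) (hcμ : 1 ≤ cμ)
    (hdoub : ∀ (x : X) (r : ℝ), 0 < r → μ (ball x (2 * r)) ≤ ENNReal.ofReal cμ * μ (ball x r))
    (cR κ : ℝ) (hcR0 : 0 < cR) (hcR1 : cR < 1) (hκ : 1 < κ)
    (hrev : ∀ (x : X) (r : ℝ), 0 < r → μ (ball x r) ≤ ENNReal.ofReal cR * μ (ball x (κ * r)))
    (s p : ℝ) (hs0 : 0 < s) (hs1 : s ≤ 1) (hp : 0 < p)
    (u : X → ℝ) (hu : MemHomHajlasz μ s p u) (huqc : HajlaszQC μ s p u) :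
    ∀ Λ : ℝ, 1 ≤ Λ → ∃ C : ℝ≥0∞, 0 < C ∧ C < ⊤ ∧
      ∀ (O : X) (j : ℕ) (t : ℝ), 0 < t →
      ∀ g : X → ℝ≥0∞, IsSGradient μ s u g →
        relCap μ s p
            {x : X | x ∈ ann κ O (κ ^ j) ∧ t < |u x - median μ u (ann κ O (κ ^ j))|}
            (annL κ Λ O (κ ^ j)) ≤
          C / ENNReal.ofReal (t ^ p) * ∫⁻ x in annL κ Λ O (κ ^ j), g x ^ p ∂μ :=
  statement7_general μ hball cμ hdoub cR κ hcR1 hκ hrev s p hs0 hp u hu huqc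

end Paper
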